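/- Let G and H be nonzero formal power series in ℝ[[ρ,θ]] such that every common vertex of their Newton polygons satisfies the non-vanishing condition a_{i,j}(G) + a_{i,j}(H) ≠ 0 (i.e. Λ^V(G\H) ∩ Λ^V(H\G) = ∅). Then the lower convex semi-hull of the support of G+H equals the lower convex semi-hull of Δ^V(G) ∪ Δ^V(H), where Δ^V denotes the vertex set of the respective Newton polygon. -/

import Mathlib

open scoped Pointwise

/-- The coefficient of `ρ^i θ^j` in a formal power series in two variables over `ℝ`. -/
noncomputable def coef (F : MvPowerSeries (Fin 2) ℝ) (p : ℕ × ℕ) : ℝ :=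
  MvPowerSeries.coeff (Finsupp.single (0 : Fin 2) p.1 + Finsupp.single (1 : Fin 2) p.2) F

/-- The support (valid index set) `Δ(F)` of a power series. -/
noncomputable def suppSet (F : MvPowerSeries (Fin 2) ℝ) : Set (ℕ × ℕ) :=
  {p | coef F p ≠ 0}

/-- Embedding of lattice indices into `ℝ²`. -/
noncomputable def embed (p : ℕ × ℕ) : ℝ × ℝ := ((p.1 : ℝ), (p.2 : ℝ))

/-- The lower convex semi-hull `℘(S) = conv(S + ℝ≥0²)` of a set of lattice points. -/
noncomputable def lsh (S : Set (ℕ × ℕ)) : Set (ℝ × ℝ) :=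
  convexHull ℝ (embed '' S + {q : ℝ × ℝ | 0 ≤ q.1 ∧ 0 ≤ q.2})

/-- The vertex set `Δ^V(F)` of the Newton polygon: the lattice points whose image
is an extreme point of the lower convex semi-hull of the support. -/
noncomputable def vertexSet (F : MvPowerSeries (Fin 2) ℝ) : Set (ℕ × ℕ) :=
  {p | embed p ∈ (lsh (suppSet F)).extremePoints ℝ}

/-- The set `Λ^V(G\H)` of vanishing common vertices. -/
noncomputable def lamV (G H : MvPowerSeries (Fin 2) ℝ) : Set (ℕ × ℕ) :=
  {p | p ∈ vertexSet G ∧ p ∈ suppSet H ∧ coef G p + coef H p = 0}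

/-!
Both sides lie in `lsh (Δ(G) ∪ Δ(H))`, which is also the semi-hull of its own vertex set. A vertex
of `Δ(G) ∪ Δ(H)` lying in `Δ(G)` is a vertex of `G` (likewise for `H`), and it cannot cancel in
`G + H`: a cancelling vertex lies in both supports, hence in `Λ^V(G\H) ∩ Λ^V(H\G)`. So both sides
are squeezed between the semi-hull of these vertices and `lsh (Δ(G) ∪ Δ(H))`.

That a set `S ⊆ ℕ²` has the same semi-hull as its vertices is a Krein–Milman-type statement for
the unbounded set `lsh S`, proved by separation; `lsh S` is closed because only the finitely many
minimal points of `S` matter.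
-/

open Set

lemma lsh_eq_convexHull_add_Ici (S : Set (ℕ × ℕ)) :
    lsh S = convexHull ℝ (embed '' S) + Ici 0 := by
  have hquadrant : {q : ℝ × ℝ | 0 ≤ q.1 ∧ 0 ≤ q.2} = Ici 0 := by ext; simp [Prod.le_def]
  rw [lsh, hquadrant, convexHull_add, (convex_Ici 0).convexHull_eq]

lemma embed_nonneg (p : ℕ × ℕ) : 0 ≤ embed p :=
  Prod.le_def.2 ⟨Nat.cast_nonneg _, Nat.cast_nonneg _⟩

lemma embed_mono : Monotone embed := fun _ _ h =>
  Prod.le_def.2 ⟨Nat.cast_le.2 h.1, Nat.cast_le.2 h.2⟩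

lemma embed_injective : Function.Injective embed := fun _ _ h =>
  Prod.ext (Nat.cast_injective (congrArg Prod.fst h)) (Nat.cast_injective (congrArg Prod.snd h))

lemma convex_lsh (S : Set (ℕ × ℕ)) : Convex ℝ (lsh S) := convex_convexHull ℝ _

lemma isUpperSet_lsh (S : Set (ℕ × ℕ)) : IsUpperSet (lsh S) := by
  intro x y hxy hx
  rw [lsh_eq_convexHull_add_Ici] at hx ⊢
  obtain ⟨z, hz, q, hq, rfl⟩ := hx
  exact ⟨z, hz, y - z, sub_nonneg.2 ((le_add_of_nonneg_right hq).trans hxy), add_sub_cancel z y⟩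

lemma embed_mem_lsh {S : Set (ℕ × ℕ)} {p : ℕ × ℕ} (hp : p ∈ S) : embed p ∈ lsh S := by
  rw [lsh_eq_convexHull_add_Ici]
  exact ⟨embed p, subset_convexHull ℝ _ (mem_image_of_mem _ hp), 0, self_mem_Ici, add_zero _⟩

lemma lsh_subset_Ici (S : Set (ℕ × ℕ)) : lsh S ⊆ Ici 0 := by
  rw [lsh_eq_convexHull_add_Ici]
  rintro _ ⟨y, hy, q, hq, rfl⟩
  have hy : y ∈ Ici 0 :=
    convexHull_min (by rintro _ ⟨p, -, rfl⟩; exact embed_nonneg p) (convex_Ici 0) hy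
  exact add_nonneg (mem_Ici.1 hy) (mem_Ici.1 hq)

lemma lsh_subset_lsh {S T : Set (ℕ × ℕ)} (h : ∀ p ∈ S, embed p ∈ lsh T) : lsh S ⊆ lsh T := by
  rw [lsh_eq_convexHull_add_Ici S]
  rintro _ ⟨y, hy, q, hq, rfl⟩
  have hy : y ∈ lsh T :=
    convexHull_min (by rintro _ ⟨p, hp, rfl⟩; exact h p hp) (convex_lsh T) hy
  exact isUpperSet_lsh T (le_add_of_nonneg_right hq) hy

lemma lsh_mono {S T : Set (ℕ × ℕ)} (h : S ⊆ T) : lsh S ⊆ lsh T :=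
  lsh_subset_lsh fun _ hp => embed_mem_lsh (h hp)

/-- `x` is the midpoint of `y` and `x + (x - y)`. -/
lemma IsUpperSet.eq_of_le_of_mem_extremePoints {E : Type*} [AddCommGroup E] [PartialOrder E]
    [IsOrderedAddMonoid E] [Module ℝ E] {A : Set E} (hA : IsUpperSet A) {x y : E}
    (hx : x ∈ A.extremePoints ℝ) (hy : y ∈ A) (hyx : y ≤ x) : y = x := by
  have hx' : x + (x - y) ∈ A := hA (le_add_of_nonneg_right (sub_nonneg.2 hyx)) hx.1
  exact hx.2 hy hx' ⟨1 / 2, 1 / 2, by norm_num, by norm_num, by norm_num, by module⟩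

lemma extremePoints_lsh_subset (S : Set (ℕ × ℕ)) : (lsh S).extremePoints ℝ ⊆ embed '' S := by
  intro x hx
  obtain ⟨_, ⟨p, hp, rfl⟩, q, hq, rfl⟩ := extremePoints_convexHull_subset hx
  have hpx : embed p = embed p + q :=
    (isUpperSet_lsh S).eq_of_le_of_mem_extremePoints hx (embed_mem_lsh hp)
      (le_add_of_nonneg_right hq)
  exact ⟨p, hp, hpx⟩

lemma finite_setOf_minimal (S : Set (ℕ × ℕ)) : {p | Minimal (· ∈ S) p}.Finite :=
  (setOfPred_minimal_antichain _).finite_of_partiallyWellOrderedOn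
    (isPWO_of_wellQuasiOrderedLE _)

lemma lsh_setOf_minimal (S : Set (ℕ × ℕ)) : lsh {p | Minimal (· ∈ S) p} = lsh S := by
  refine (lsh_mono fun _ hp => hp.prop).antisymm (lsh_subset_lsh fun p hp => ?_)
  obtain ⟨m, hmp, hm⟩ := exists_minimal_le_of_wellFoundedLT (· ∈ S) p hp
  exact isUpperSet_lsh _ (embed_mono hmp) (embed_mem_lsh hm)

lemma isClosed_lsh (S : Set (ℕ × ℕ)) : IsClosed (lsh S) := by
  rw [← lsh_setOf_minimal, lsh_eq_convexHull_add_Ici]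
  exact isClosed_Ici.add_left_of_isCompact
    (((finite_setOf_minimal S).image embed).isCompact_convexHull (𝕜 := ℝ))

lemma ContinuousLinearMap.apply_eq_fst_mul_add_snd_mul (f : ℝ × ℝ →L[ℝ] ℝ) (x : ℝ × ℝ) :
    f x = x.1 * f (1, 0) + x.2 * f (0, 1) := by
  conv_lhs => rw [show x = x.1 • ((1 : ℝ), (0 : ℝ)) + x.2 • ((0 : ℝ), (1 : ℝ)) by ext <;> simp]
  rw [map_add, map_smul, map_smul, smul_eq_mul, smul_eq_mul]

lemma exists_isMinOn_lsh {S : Set (ℕ × ℕ)} (hS : S.Nonempty) {f : ℝ × ℝ →L[ℝ] ℝ}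
    (hf : ∀ q, 0 ≤ q → 0 ≤ f q) : ∃ x ∈ lsh S, IsMinOn f (lsh S) x := by
  obtain ⟨p, hp⟩ := hS
  obtain ⟨m, -, hm⟩ := exists_minimal_le_of_wellFoundedLT (· ∈ S) p hp
  obtain ⟨a, ha, hmin⟩ :=
    exists_min_image _ (fun p => f (embed p)) (finite_setOf_minimal S) ⟨m, hm⟩
  refine ⟨embed a, embed_mem_lsh ha.prop, fun x hx => ?_⟩
  rw [← lsh_setOf_minimal, lsh_eq_convexHull_add_Ici] at hx
  obtain ⟨y, hy, q, hq, rfl⟩ := hx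
  have hy : y ∈ {z | f (embed a) ≤ f z} :=
    convexHull_min (by rintro _ ⟨p, hp, rfl⟩; exact hmin p hp)
      ((convex_Ici _).linear_preimage f.toLinearMap) hy
  simpa using add_le_add hy (hf q hq)

/-- `vertexSet F` unfolds to `lshVertices (suppSet F)`. -/
def lshVertices (S : Set (ℕ × ℕ)) : Set (ℕ × ℕ) := {p | embed p ∈ (lsh S).extremePoints ℝ}

lemma lshVertices_subset (S : Set (ℕ × ℕ)) : lshVertices S ⊆ S := by
  intro p hp
  obtain ⟨q, hq, hqp⟩ := extremePoints_lsh_subset S hp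
  rwa [← embed_injective hqp]

/-- The minimizers of `f` form a compact exposed face, whose extreme points are vertices. -/
lemma exists_mem_lshVertices_isMinOn {S : Set (ℕ × ℕ)} (hS : S.Nonempty) {f : ℝ × ℝ →L[ℝ] ℝ}
    (h₁ : 0 < f (1, 0)) (h₂ : 0 < f (0, 1)) :
    ∃ v ∈ lshVertices S, IsMinOn f (lsh S) (embed v) := by
  have hf : ∀ q, 0 ≤ q → 0 ≤ f q := fun q hq => by
    rw [f.apply_eq_fst_mul_add_snd_mul]
    exact add_nonneg (mul_nonneg hq.1 h₁.le) (mul_nonneg hq.2 h₂.le)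
  obtain ⟨a, ha, hmin⟩ := exists_isMinOn_lsh hS hf
  have hexp : IsExposed ℝ (lsh S) ((-f).toExposed (lsh S)) :=
    ContinuousLinearMap.toExposed.isExposed
  have mem_face {x} : x ∈ (-f).toExposed (lsh S) ↔ x ∈ lsh S ∧ IsMinOn f (lsh S) x := by
    simp [ContinuousLinearMap.toExposed, isMinOn_iff]
  have hbdd : (-f).toExposed (lsh S) ⊆ Icc 0 (f a / f (1, 0), f a / f (0, 1)) := by
    intro x hx
    obtain ⟨hxS, hxmin⟩ := mem_face.1 hx
    have hx0 : 0 ≤ x := lsh_subset_Ici S hxS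
    have hfx : f x ≤ f a := hxmin ha
    obtain ⟨hx₁, hx₂⟩ : 0 ≤ x.1 ∧ 0 ≤ x.2 := Prod.le_def.1 hx0
    rw [f.apply_eq_fst_mul_add_snd_mul] at hfx
    refine ⟨hx0, Prod.le_def.2 ⟨?_, ?_⟩⟩
    · rw [le_div_iff₀ h₁]; linarith [mul_nonneg hx₂ h₂.le]
    · rw [le_div_iff₀ h₂]; linarith [mul_nonneg hx₁ h₁.le]
  obtain ⟨e, he⟩ := (isCompact_Icc.of_isClosed_subset (hexp.isClosed (isClosed_lsh S)) hbdd)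
    |>.extremePoints_nonempty ⟨a, mem_face.2 ⟨ha, hmin⟩⟩
  have heS := hexp.isExtreme.extremePoints_subset_extremePoints he
  obtain ⟨v, -, rfl⟩ := extremePoints_lsh_subset S heS
  exact ⟨v, heS, (mem_face.1 he.1).2⟩

lemma IsUpperSet.apply_nonneg_of_forall_lt {E : Type*} [AddCommGroup E] [PartialOrder E]
    [IsOrderedAddMonoid E] [Module ℝ E] [PosSMulMono ℝ E] {A : Set E} (hA : IsUpperSet A)
    {x : E} (hx : x ∈ A) {g : E →ₗ[ℝ] ℝ} {u : ℝ} (hg : ∀ y ∈ A, u < g y) {q : E} (hq : 0 ≤ q) :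
    0 ≤ g q := by
  by_contra! hgq
  set t := (g x - u) / -g q
  have ht : 0 ≤ t := div_nonneg (sub_nonneg.2 (hg x hx).le) (neg_nonneg.2 hgq.le)
  have hxt : x + t • q ∈ A := hA (le_add_of_nonneg_right (smul_nonneg ht hq)) hx
  have hgxt : g (x + t • q) = u := by
    simp only [map_add, map_smul, smul_eq_mul, t]
    field_simp [hgq.ne]
    ring
  exact (hg _ hxt).ne' hgxt

/-- If `embed p` were separated from `lsh (lshVertices S)` by `g`, a vertex minimizing a slightly
perturbed, strictly positive `g` would lie on the wrong side. -/
lemma embed_mem_lsh_lshVertices {S : Set (ℕ × ℕ)} {p : ℕ × ℕ} (hp : p ∈ S) :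
    embed p ∈ lsh (lshVertices S) := by
  by_contra hp'
  obtain ⟨g, u, hgp, hg⟩ :=
    geometric_hahn_banach_point_closed (convex_lsh _) (isClosed_lsh _) hp'
  obtain ⟨v₀, hv₀, -⟩ := exists_mem_lshVertices_isMinOn ⟨p, hp⟩
    (f := ContinuousLinearMap.fst ℝ ℝ ℝ + ContinuousLinearMap.snd ℝ ℝ ℝ) (by simp) (by simp)
  have hg_nonneg (q : ℝ × ℝ) (hq : 0 ≤ q) : 0 ≤ g q :=
    (isUpperSet_lsh _).apply_nonneg_of_forall_lt (embed_mem_lsh hv₀) (g := g.toLinearMap) hg hq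
  obtain ⟨ε, hε, hεp⟩ := exists_pos_mul_lt (sub_pos.2 hgp) ((embed p).1 + (embed p).2)
  set gε := g + ε • (ContinuousLinearMap.fst ℝ ℝ ℝ + ContinuousLinearMap.snd ℝ ℝ ℝ)
  have hgε₁ : 0 < gε (1, 0) := by
    simpa [gε] using add_pos_of_nonneg_of_pos (hg_nonneg (1, 0) (by simp [Prod.le_def])) hε
  have hgε₂ : 0 < gε (0, 1) := by
    simpa [gε] using add_pos_of_nonneg_of_pos (hg_nonneg (0, 1) (by simp [Prod.le_def])) hε
  obtain ⟨v, hv, hvmin⟩ := exists_mem_lshVertices_isMinOn ⟨p, hp⟩ hgε₁ hgε₂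
  have hvp : gε (embed v) ≤ gε (embed p) := hvmin (embed_mem_lsh hp)
  obtain ⟨hv₁, hv₂⟩ : 0 ≤ (embed v).1 ∧ 0 ≤ (embed v).2 := Prod.le_def.1 (embed_nonneg v)
  have huv : u < g (embed v) := hg _ (embed_mem_lsh hv)
  simp only [gε, add_apply, smul_apply,
    ContinuousLinearMap.coe_fst', ContinuousLinearMap.coe_snd', smul_eq_mul] at hvp
  linarith [mul_nonneg hε.le (add_nonneg hv₁ hv₂)]

theorem lsh_lshVertices (S : Set (ℕ × ℕ)) : lsh (lshVertices S) = lsh S :=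
  (lsh_mono (lshVertices_subset S)).antisymm (lsh_subset_lsh fun _ => embed_mem_lsh_lshVertices)

lemma mem_lshVertices_of_subset {S T : Set (ℕ × ℕ)} (hST : S ⊆ T) {p : ℕ × ℕ} (hp : p ∈ S)
    (hpT : p ∈ lshVertices T) : p ∈ lshVertices S :=
  inter_extremePoints_subset_extremePoints_of_subset (lsh_mono hST) ⟨embed_mem_lsh hp, hpT⟩

lemma lshVertices_union_subset (S T : Set (ℕ × ℕ)) :
    lshVertices (S ∪ T) ⊆ lshVertices S ∪ lshVertices T := fun _ hp =>
  (lshVertices_subset _ hp).imp (mem_lshVertices_of_subset subset_union_left · hp)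
    (mem_lshVertices_of_subset subset_union_right · hp)

lemma coef_add (G H : MvPowerSeries (Fin 2) ℝ) (p : ℕ × ℕ) :
    coef (G + H) p = coef G p + coef H p :=
  map_add _ G H

lemma suppSet_add_subset (G H : MvPowerSeries (Fin 2) ℝ) :
    suppSet (G + H) ⊆ suppSet G ∪ suppSet H := by
  intro p (hp : coef (G + H) p ≠ 0)
  rw [coef_add] at hp
  by_cases hG : coef G p = 0
  · exact Or.inr fun hH => hp (by rw [hG, hH, add_zero])
  · exact Or.inl hG

lemma lshVertices_union_subset_suppSet_add {G H : MvPowerSeries (Fin 2) ℝ}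
    (hnv : lamV G H ∩ lamV H G = ∅) :
    lshVertices (suppSet G ∪ suppSet H) ⊆ suppSet (G + H) := by
  intro p hp (hzero : coef (G + H) p = 0)
  rw [coef_add] at hzero
  have hpU := lshVertices_subset _ hp
  have hpG : p ∈ suppSet G := fun hG => hpU.elim (· hG) (· (by linarith))
  have hpH : p ∈ suppSet H := fun hH => hpG (by linarith)
  have hvG : p ∈ vertexSet G := mem_lshVertices_of_subset subset_union_left hpG hp
  have hvH : p ∈ vertexSet H := mem_lshVertices_of_subset subset_union_right hpH hp
  exact hnv.subset ⟨⟨hvG, hpH, hzero⟩, ⟨hvH, hpG, by linarith⟩⟩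

theorem lsh_support_add_general (G H : MvPowerSeries (Fin 2) ℝ)
    (hnv : lamV G H ∩ lamV H G = ∅) :
    lsh (suppSet (G + H)) = lsh (vertexSet G ∪ vertexSet H) := by
  set U := suppSet G ∪ suppSet H
  have hvert : lshVertices U ⊆ vertexSet G ∪ vertexSet H := lshVertices_union_subset _ _
  have hsupp : lshVertices U ⊆ suppSet (G + H) := lshVertices_union_subset_suppSet_add hnv
  have hvert_supp : vertexSet G ∪ vertexSet H ⊆ U :=
    union_subset_union (lshVertices_subset _) (lshVertices_subset _)
  apply Subset.antisymm
  · calc lsh (suppSet (G + H)) ⊆ lsh U := lsh_mono (suppSet_add_subset G H)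
      _ = lsh (lshVertices U) := (lsh_lshVertices U).symm
      _ ⊆ lsh (vertexSet G ∪ vertexSet H) := lsh_mono hvert
  · calc lsh (vertexSet G ∪ vertexSet H) ⊆ lsh U := lsh_mono hvert_supp
      _ = lsh (lshVertices U) := (lsh_lshVertices U).symm
      _ ⊆ lsh (suppSet (G + H)) := lsh_mono hsupp

/-- under the non-vanishing condition for common vertices,
`℘(Δ(G+H)) = ℘(Δ^V(G) ∪ Δ^V(H))`. -/
theorem lsh_support_add (G H : MvPowerSeries (Fin 2) ℝ) (hG : G ≠ 0) (hH : H ≠ 0)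
    (hnv : lamV G H ∩ lamV H G = ∅) :
    lsh (suppSet (G + H)) = lsh (vertexSet G ∪ vertexSet H) :=
  lsh_support_add_general G H hnv
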